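/- Let X^n be a random vector on {0,1}^n and for t ∈ [0,1] let Y^n(t) be the output of X^n through a memoryless binary erasure channel with erasure probability 1-t (each coordinate is revealed independently with probability t, otherwise replaced by an erasure symbol). Then the map t ↦ I(X^n; Y^n(t))/t is non-increasing on (0,1]. -/

import Mathlib

/-! Let `S` be the random set of unerased coordinates, containing each index independently with
probability `t`. Since `Yⁿ(t)` is the pair `(S, X_S)` and `S` is independent of `Xⁿ`,
`I(Xⁿ; Yⁿ(t)) = E[H(X_S)]`. The set function `s ↦ H(X_s)` is submodular and vanishes at `∅`, so
Shearer's lemma gives `u · H(X_s) ≤ E[H(X_{s ∩ S'})]` for an independent `u`-random set `S'`.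
As `S ∩ S'` is a `t u`-random set, averaging over `S` yields `u · I(t) ≤ I(t u)`. -/

open Finset

/-- Shannon entropy (in bits) of a pmf on a finite type (convention `0·log 0 = 0`
holds since `Real.logb 2 0 = 0`). -/
noncomputable def H2 {α : Type*} [Fintype α] (p : α → ℝ) : ℝ :=
  -∑ x, p x * Real.logb 2 (p x)

/-- `p` is a probability mass function. -/
def IsPMF {α : Type*} [Fintype α] (p : α → ℝ) : Prop :=
  (∀ x, 0 ≤ p x) ∧ ∑ x, p x = 1

/-- Left marginal of a joint pmf. -/
noncomputable def margL {α β : Type*} [Fintype α] [Fintype β] (p : α × β → ℝ) : α → ℝ :=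
  fun a => ∑ b, p (a, b)

/-- Right marginal of a joint pmf. -/
noncomputable def margR {α β : Type*} [Fintype α] [Fintype β] (p : α × β → ℝ) : β → ℝ :=
  fun b => ∑ a, p (a, b)

/-- Mutual information (in bits) of a joint pmf: `I = H(X) + H(Y) - H(X,Y)`. -/
noncomputable def MI {α β : Type*} [Fintype α] [Fintype β] (p : α × β → ℝ) : ℝ :=
  H2 (margL p) + H2 (margR p) - H2 p

/-- Binary erasure channel on `Bool` with survival probability `t`
(erasure probability `1 - t`); `none` is the erasure symbol. -/
noncomputable def becW (t : ℝ) (x : Bool) : Option Bool → ℝ :=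
  fun y => match y with
  | none => 1 - t
  | some b => if b = x then t else 0

section RandomSubset

variable {ι : Type*} [DecidableEq ι]

def Submodular (f : Finset ι → ℝ) : Prop :=
  ∀ s t, f (s ∪ t) + f (s ∩ t) ≤ f s + f t

variable {f : Finset ι → ℝ}

lemma Submodular.insert_sub_le (hf : Submodular f) {s t : Finset ι} {k : ι} (hst : s ⊆ t)
    (hk : k ∉ t) : f (insert k t) - f t ≤ f (insert k s) - f s := by
  have h := hf (insert k s) t
  rw [insert_union, union_eq_right.2 hst, insert_inter_of_notMem hk,
    inter_eq_left.2 hst] at h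
  linarith

variable [Fintype ι]

noncomputable def bernoulliWeight (t : ℝ) (s : Finset ι) : ℝ :=
  ∏ i, if i ∈ s then t else 1 - t

lemma bernoulliWeight_nonneg {t : ℝ} (h₀ : 0 ≤ t) (h₁ : t ≤ 1) (s : Finset ι) :
    0 ≤ bernoulliWeight t s :=
  prod_nonneg fun i _ => by split_ifs <;> linarith

lemma sum_prod_ite_mem (f g : ι → ℝ) :
    ∑ s : Finset ι, ∏ i, (if i ∈ s then f i else g i) = ∏ i, (f i + g i) := by
  rw [Fintype.prod_add]
  refine sum_congr rfl fun s _ => ?_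
  rw [← prod_mul_prod_compl s]
  congr 1 <;> refine prod_congr rfl fun i hi => ?_ <;> simp_all

lemma sum_sum_prod_ite_mem (f₁₁ f₁₀ f₀₁ f₀₀ : ι → ℝ) :
    ∑ s : Finset ι, ∑ s' : Finset ι, ∏ i, (if i ∈ s then (if i ∈ s' then f₁₁ i else f₁₀ i)
      else (if i ∈ s' then f₀₁ i else f₀₀ i)) = ∏ i, (f₁₁ i + f₁₀ i + (f₀₁ i + f₀₀ i)) := by
  have hswap : ∀ s s' : Finset ι, ∀ i, (if i ∈ s then (if i ∈ s' then f₁₁ i else f₁₀ i)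
      else (if i ∈ s' then f₀₁ i else f₀₀ i)) =
      if i ∈ s' then (if i ∈ s then f₁₁ i else f₀₁ i) else (if i ∈ s then f₁₀ i else f₀₀ i) := by
    intro s s' i; split_ifs <;> rfl
  simp_rw [hswap, sum_prod_ite_mem, ite_add_ite]
  rw [sum_prod_ite_mem]

lemma sum_bernoulliWeight_filter_mem (u : ℝ) (k : ι) :
    ∑ s with k ∈ s, bernoulliWeight u s = u := by
  have hφ : ∀ s : Finset ι, (if k ∈ s then bernoulliWeight u s else 0) =
      ∏ i, (if i ∈ s then u else if i = k then 0 else 1 - u) := by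
    intro s
    by_cases hk : k ∈ s
    · exact (if_pos hk).trans (prod_congr rfl fun i _ => by split_ifs <;> simp_all)
    · rw [if_neg hk, prod_eq_zero (mem_univ k) (by simp [hk])]
  rw [sum_filter, sum_congr rfl fun s _ => hφ s, sum_prod_ite_mem]
  simp [apply_ite (u + ·)]

lemma sum_sum_ite_inter_eq_bernoulliWeight (t u : ℝ) (a : Finset ι) :
    ∑ s, ∑ s', (if s ∩ s' = a then bernoulliWeight t s * bernoulliWeight u s' else 0) =
      bernoulliWeight (t * u) a := by
  have hφ : ∀ s s' : Finset ι,
      (if s ∩ s' = a then bernoulliWeight t s * bernoulliWeight u s' else 0) =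
      ∏ i, (if i ∈ s then (if i ∈ s' then (if i ∈ a then t * u else 0)
          else (if i ∈ a then 0 else t * (1 - u)))
        else (if i ∈ s' then (if i ∈ a then 0 else (1 - t) * u)
          else (if i ∈ a then 0 else (1 - t) * (1 - u)))) := by
    intro s s'
    split_ifs with ha
    · rw [bernoulliWeight, bernoulliWeight, ← prod_mul_distrib]
      refine prod_congr rfl fun i _ => ?_
      subst ha
      split_ifs <;> simp_all
    · obtain ⟨i, hi⟩ : ∃ i, ¬ (i ∈ s ∩ s' ↔ i ∈ a) := by
        by_contra! h; exact ha (Finset.ext h)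
      refine (prod_eq_zero (mem_univ i) ?_).symm
      rw [mem_inter] at hi
      split_ifs <;> simp_all
  simp_rw [hφ, sum_sum_prod_ite_mem, bernoulliWeight]
  refine prod_congr rfl fun i _ => ?_
  split_ifs <;> ring

lemma sum_sum_bernoulliWeight_mul_inter (t u : ℝ) (g : Finset ι → ℝ) :
    ∑ s, ∑ s', bernoulliWeight t s * bernoulliWeight u s' * g (s ∩ s') =
      ∑ a, bernoulliWeight (t * u) a * g a := by
  symm
  simp_rw [← sum_sum_ite_inter_eq_bernoulliWeight t u, sum_mul, ite_mul, zero_mul]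
  rw [sum_comm]
  refine sum_congr rfl fun s _ => ?_
  rw [sum_comm]
  exact sum_congr rfl fun s' _ => by simp

lemma Submodular.mul_le_sum_bernoulliWeight_mul_inter (hf : Submodular f) (hf₀ : f ∅ = 0)
    {u : ℝ} (hu₀ : 0 ≤ u) (hu₁ : u ≤ 1) (s : Finset ι) :
    u * f s ≤ ∑ s', bernoulliWeight u s' * f (s ∩ s') := by
  induction s using Finset.induction_on with
  | empty => simp [hf₀]
  | insert k s hk ih =>
    have hstep : ∀ s' : Finset ι, (if k ∈ s' then f (insert k s) - f s else 0) ≤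
        f (insert k s ∩ s') - f (s ∩ s') := by
      intro s'
      split_ifs with hks'
      · rw [insert_inter_of_mem hks']
        exact hf.insert_sub_le inter_subset_left hk
      · rw [insert_inter_of_notMem hks', sub_self]
    calc u * f (insert k s) = u * f s + u * (f (insert k s) - f s) := by ring
      _ ≤ ∑ s', bernoulliWeight u s' * f (s ∩ s') +
          ∑ s', bernoulliWeight u s' * (if k ∈ s' then f (insert k s) - f s else 0) := by
        simp_rw [mul_ite, mul_zero]
        rw [← sum_filter, ← sum_mul, sum_bernoulliWeight_filter_mem]
        linarith
      _ ≤ ∑ s', bernoulliWeight u s' * f (insert k s ∩ s') := by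
        rw [← sum_add_distrib]
        refine sum_le_sum fun s' _ => ?_
        have := mul_le_mul_of_nonneg_left (hstep s') (bernoulliWeight_nonneg hu₀ hu₁ s')
        linarith

lemma Submodular.mul_sum_bernoulliWeight_mul_le (hf : Submodular f) (hf₀ : f ∅ = 0)
    {t u : ℝ} (ht₀ : 0 ≤ t) (ht₁ : t ≤ 1) (hu₀ : 0 ≤ u) (hu₁ : u ≤ 1) :
    u * ∑ s, bernoulliWeight t s * f s ≤ ∑ s, bernoulliWeight (t * u) s * f s := by
  rw [← sum_sum_bernoulliWeight_mul_inter, mul_sum]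
  refine sum_le_sum fun s _ => ?_
  simp_rw [mul_assoc, ← mul_sum]
  rw [mul_left_comm]
  exact mul_le_mul_of_nonneg_left (hf.mul_le_sum_bernoulliWeight_mul_inter hf₀ hu₀ hu₁ s)
    (bernoulliWeight_nonneg ht₀ ht₁ s)

lemma Submodular.antitoneOn_sum_bernoulliWeight_mul_div (hf : Submodular f) (hf₀ : f ∅ = 0) :
    AntitoneOn (fun t => (∑ s, bernoulliWeight t s * f s) / t) (Set.Ioc 0 1) := by
  rintro t₁ ⟨ht₁, -⟩ t₂ ⟨ht₂, ht₂₁⟩ h12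
  have key := hf.mul_sum_bernoulliWeight_mul_le hf₀ ht₂.le ht₂₁ (div_nonneg ht₁.le ht₂.le)
    (div_le_one_of_le₀ h12 ht₂.le)
  rw [mul_div_cancel₀ _ ht₂.ne'] at key
  rw [div_le_div_iff₀ ht₂ ht₁]
  calc (∑ s, bernoulliWeight t₂ s * f s) * t₁
      = t₂ * (t₁ / t₂ * ∑ s, bernoulliWeight t₂ s * f s) := by field_simp
    _ ≤ t₂ * ∑ s, bernoulliWeight t₁ s * f s := mul_le_mul_of_nonneg_left key ht₂.le
    _ = _ := mul_comm _ _

end RandomSubset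

section MarginalEntropy

variable {ι α : Type*} [Fintype ι] [DecidableEq ι] [Fintype α] [DecidableEq α]

noncomputable def marginalProb (p : (ι → α) → ℝ) (s : Finset ι) (x : ι → α) : ℝ :=
  ∑ x' with ∀ i ∈ s, x' i = x i, p x'

noncomputable def marginalEntropy (p : (ι → α) → ℝ) (s : Finset ι) : ℝ :=
  -∑ x, p x * Real.logb 2 (marginalProb p s x)

variable {p : (ι → α) → ℝ}

lemma marginalProb_congr {s : Finset ι} {x z : ι → α} (h : ∀ i ∈ s, x i = z i) :
    marginalProb p s x = marginalProb p s z := by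
  unfold marginalProb
  congr! 4 with x' - i hi
  rw [h i hi]

lemma le_marginalProb (hp : ∀ x, 0 ≤ p x) (s : Finset ι) (x : ι → α) :
    p x ≤ marginalProb p s x :=
  single_le_sum (fun x' _ => hp x') (by simp)

lemma marginalEntropy_empty (hp : ∑ x, p x = 1) : marginalEntropy p ∅ = 0 := by
  simp [marginalEntropy, marginalProb, hp]

lemma marginalProb_union_of_agree {A B : Finset ι} {x y z : ι → α}
    (hy : ∀ i ∈ A, y i = x i) (hz : ∀ i ∈ B, z i = x i) :
    marginalProb p (A ∪ B) x =
      ∑ x' with (∀ i ∈ A, y i = x' i) ∧ ∀ i ∈ B, z i = x' i, p x' := by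
  unfold marginalProb
  congr! 2 with x'
  simp only [mem_union]
  constructor
  · intro h
    exact ⟨fun i hi => (hy i hi).trans (h i (.inl hi)).symm,
      fun i hi => (hz i hi).trans (h i (.inr hi)).symm⟩
  · rintro ⟨hA, hB⟩ i (hi | hi)
    · exact (hA i hi).symm.trans (hy i hi)
    · exact (hB i hi).symm.trans (hz i hi)

lemma sum_div_marginalProb_union_le (A B : Finset ι) (y z : ι → α) :
    ∑ x with (∀ i ∈ A, y i = x i) ∧ ∀ i ∈ B, z i = x i, p x / marginalProb p (A ∪ B) x ≤
      if ∀ i ∈ A ∩ B, z i = y i then 1 else 0 := by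
  split_ifs with hyz
  · rw [sum_congr rfl fun x hx => by
      rw [marginalProb_union_of_agree (mem_filter.1 hx).2.1 (mem_filter.1 hx).2.2], ← sum_div]
    exact div_self_le_one _
  · refine (sum_eq_zero fun x hx => absurd ?_ hyz).le
    obtain ⟨hA, hB⟩ := (mem_filter.1 hx).2
    intro i hi
    rw [mem_inter] at hi
    exact (hB i hi.2).trans (hA i hi.1).symm

lemma sum_mul_marginalProb_ratio_le (hp : ∀ x, 0 ≤ p x) (A B : Finset ι) :
    ∑ x, p x * (marginalProb p A x * marginalProb p B x /
      (marginalProb p (A ∪ B) x * marginalProb p (A ∩ B) x)) ≤ ∑ x, p x := by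
  set q := marginalProb p
  let C : (ι → α) → (ι → α) → (ι → α) → Prop := fun y z x =>
    (∀ i ∈ A, y i = x i) ∧ ∀ i ∈ B, z i = x i
  have hexpand : ∀ x, p x * (q A x * q B x / (q (A ∪ B) x * q (A ∩ B) x)) =
      ∑ y, ∑ z, if C y z x then p y * p z / q (A ∩ B) y * (p x / q (A ∪ B) x) else 0 := by
    intro x
    have hprod : q A x * q B x = ∑ y, ∑ z, if C y z x then p y * p z else 0 := by
      simp only [q, marginalProb, sum_filter, sum_mul_sum, ite_zero_mul_ite_zero]
      rfl
    rw [hprod, sum_div, mul_sum]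
    refine sum_congr rfl fun y _ => ?_
    rw [sum_div, mul_sum]
    refine sum_congr rfl fun z _ => ?_
    split_ifs with hC
    · have hxy : q (A ∩ B) x = q (A ∩ B) y :=
        marginalProb_congr fun i hi => (hC.1 i (mem_inter.1 hi).1).symm
      rw [hxy]
      ring
    · simp
  calc ∑ x, p x * (q A x * q B x / (q (A ∪ B) x * q (A ∩ B) x))
      = ∑ y, ∑ z, p y * p z / q (A ∩ B) y *
          ∑ x with C y z x, p x / q (A ∪ B) x := by
        simp_rw [hexpand, mul_sum, sum_filter]
        rw [sum_comm]
        exact sum_congr rfl fun y _ => sum_comm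
    _ ≤ ∑ y, ∑ z, p y * p z / q (A ∩ B) y * if ∀ i ∈ A ∩ B, z i = y i then 1 else 0 := by
        gcongr with y _ z _
        · exact div_nonneg (mul_nonneg (hp y) (hp z)) (sum_nonneg fun _ _ => hp _)
        · exact sum_div_marginalProb_union_le A B y z
    _ = ∑ y, p y / q (A ∩ B) y * q (A ∩ B) y := by
        refine sum_congr rfl fun y _ => ?_
        simp only [q, marginalProb, sum_filter, mul_sum]
        exact sum_congr rfl fun z _ => by split_ifs <;> ring
    _ ≤ ∑ y, p y := by
        refine sum_le_sum fun y _ => ?_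
        rcases eq_or_ne (q (A ∩ B) y) 0 with h | h
        · simp [h, hp y]
        · rw [div_mul_cancel₀ _ h]

lemma marginalEntropy_eq_neg_sum_mul_log_div (s : Finset ι) :
    marginalEntropy p s = -(∑ x, p x * Real.log (marginalProb p s x)) / Real.log 2 := by
  simp only [marginalEntropy, Real.logb, mul_div_assoc', sum_div, neg_div]

lemma submodular_marginalEntropy (hp : ∀ x, 0 ≤ p x) : Submodular (marginalEntropy p) := by
  intro A B
  simp only [marginalEntropy_eq_neg_sum_mul_log_div, ← add_div]
  refine div_le_div_of_nonneg_right ?_ (Real.log_nonneg one_le_two)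
  set q := marginalProb p
  have hgibbs : ∀ x, p x * (Real.log (q A x) + Real.log (q B x) - Real.log (q (A ∪ B) x) -
      Real.log (q (A ∩ B) x)) ≤
      p x * (q A x * q B x / (q (A ∪ B) x * q (A ∩ B) x)) - p x := by
    intro x
    rcases (hp x).eq_or_lt with h | h
    · simp [← h]
    have hq : ∀ s, 0 < q s x := fun s => h.trans_le (le_marginalProb hp s x)
    have hlog := Real.log_le_sub_one_of_pos
      (div_pos (mul_pos (hq A) (hq B)) (mul_pos (hq (A ∪ B)) (hq (A ∩ B))))
    rw [Real.log_div (mul_pos (hq A) (hq B)).ne' (mul_pos (hq _) (hq _)).ne',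
      Real.log_mul (hq A).ne' (hq B).ne', Real.log_mul (hq _).ne' (hq _).ne'] at hlog
    nlinarith
  have hsum := sum_le_sum (s := univ) fun x _ => hgibbs x
  have hratio := sum_mul_marginalProb_ratio_le hp A B
  simp only [mul_sub, mul_add, sum_sub_distrib, sum_add_distrib] at hsum
  linarith

end MarginalEntropy

section ErasureChannel

variable {ι α : Type*} [Fintype ι] [DecidableEq ι]

def mask (s : Finset ι) (x : ι → α) : ι → Option α :=
  fun i => if i ∈ s then some (x i) else none

def revealed (y : ι → Option α) : Finset ι :=
  {i | (y i).isSome}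

omit [DecidableEq ι] in
lemma mem_revealed {y : ι → Option α} {i : ι} : i ∈ revealed y ↔ (y i).isSome := by
  simp [revealed]

@[simp]
lemma revealed_mask (s : Finset ι) (x : ι → α) : revealed (mask s x) = s := by
  ext i; by_cases hi : i ∈ s <;> simp [revealed, mask, hi]

omit [Fintype ι] in
lemma mask_eq_mask_iff {s : Finset ι} {x x' : ι → α} :
    mask s x' = mask s x ↔ ∀ i ∈ s, x' i = x i := by
  simp only [funext_iff, mask]
  refine forall_congr' fun i => ?_
  by_cases hi : i ∈ s <;> simp [hi]

variable [Fintype α] [DecidableEq α] {p : (ι → α) → ℝ}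

noncomputable def consistentProb (p : (ι → α) → ℝ) (y : ι → Option α) : ℝ :=
  ∑ x with mask (revealed y) x = y, p x

lemma consistentProb_mask (s : Finset ι) (x : ι → α) :
    consistentProb p (mask s x) = marginalProb p s x := by
  simp only [consistentProb, marginalProb, revealed_mask, mask_eq_mask_iff]

lemma sum_filter_mask_eq (s : Finset ι) (y : ι → Option α) :
    ∑ x with mask s x = y, p x = if revealed y = s then consistentProb p y else 0 := by
  split_ifs with hy
  · rw [consistentProb, hy]
  · exact sum_eq_zero fun x hx => absurd (by rw [← (mem_filter.1 hx).2, revealed_mask]) hy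

lemma sum_negMulLog_consistentProb_of_revealed_eq (s : Finset ι) :
    ∑ y with revealed y = s, Real.negMulLog (consistentProb p y) =
      Real.log 2 * marginalEntropy p s := by
  have hfib : ∀ y, ∑ x with mask s x = y, p x * Real.log (marginalProb p s x) =
      (∑ x with mask s x = y, p x) * Real.log (consistentProb p y) := fun y => by
    rw [sum_mul]
    exact sum_congr rfl fun x hx => by rw [← consistentProb_mask, (mem_filter.1 hx).2]
  rw [marginalEntropy_eq_neg_sum_mul_log_div, mul_div_cancel₀ _ (Real.log_pos one_lt_two).ne',
    ← sum_fiberwise univ (mask s), ← sum_neg_distrib, sum_filter]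
  refine sum_congr rfl fun y _ => ?_
  rw [hfib, sum_filter_mask_eq]
  split_ifs <;> simp [Real.negMulLog]

end ErasureChannel

section BinaryErasureChannel

variable {ι : Type*} [Fintype ι] [DecidableEq ι]

lemma H2_eq_sum_negMulLog_div {β : Type*} [Fintype β] (q : β → ℝ) :
    H2 q = (∑ b, Real.negMulLog (q b)) / Real.log 2 := by
  simp only [H2, Real.logb, Real.negMulLog, ← sum_neg_distrib, sum_div]
  exact sum_congr rfl fun b _ => by ring

lemma prod_becW (t : ℝ) (x : ι → Bool) (y : ι → Option Bool) :
    ∏ i, becW t (x i) (y i) =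
      if mask (revealed y) x = y then bernoulliWeight t (revealed y) else 0 := by
  have hfactor : ∀ i, becW t (x i) (y i) = (if i ∈ revealed y then t else 1 - t) *
      if mask (revealed y) x i = y i then 1 else 0 := by
    intro i
    rcases hy : y i with _ | b <;> simp [becW, mask, mem_revealed, hy, eq_comm]
  rw [prod_congr rfl fun i _ => hfactor i, prod_mul_distrib, prod_boole]
  by_cases h : mask (revealed y) x = y
  · rw [if_pos fun i _ => congrFun h i, if_pos h, mul_one, bernoulliWeight]
  · obtain ⟨i, hi⟩ := Function.ne_iff.1 h
    rw [if_neg fun h' => hi (h' i (mem_univ i)), if_neg h, mul_zero]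

lemma sum_prod_becW (t : ℝ) (x : ι → Bool) :
    ∑ y : ι → Option Bool, ∏ i, becW t (x i) (y i) = 1 := by
  rw [← Fintype.prod_sum (fun i c => becW t (x i) c)]
  refine prod_eq_one fun i _ => ?_
  cases x i <;> simp [Fintype.sum_option, becW]

lemma MI_becW_eq_sum (p : (ι → Bool) → ℝ) (t : ℝ) :
    MI (fun xy : (ι → Bool) × (ι → Option Bool) => p xy.1 * ∏ i, becW t (xy.1 i) (xy.2 i)) =
      ∑ s, bernoulliWeight t s * marginalEntropy p s := by
  set W : (ι → Option Bool) → ℝ := fun y => bernoulliWeight t (revealed y)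
  have hL : margL (fun xy : (ι → Bool) × (ι → Option Bool) =>
      p xy.1 * ∏ i, becW t (xy.1 i) (xy.2 i)) = p := by
    funext x
    simp only [margL]
    rw [← mul_sum, sum_prod_becW, mul_one]
  have hR : margR (fun xy : (ι → Bool) × (ι → Option Bool) =>
      p xy.1 * ∏ i, becW t (xy.1 i) (xy.2 i)) = fun y => W y * consistentProb p y := by
    funext y
    simp only [margR, prod_becW, mul_ite, mul_zero, ← sum_filter, consistentProb, mul_sum]
    exact sum_congr rfl fun x _ => mul_comm _ _
  have hjoint : ∑ xy : (ι → Bool) × (ι → Option Bool),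
      Real.negMulLog (p xy.1 * ∏ i, becW t (xy.1 i) (xy.2 i)) =
      ∑ x, Real.negMulLog (p x) + ∑ y, consistentProb p y * Real.negMulLog (W y) := by
    simp only [Fintype.sum_prod_type, Real.negMulLog_mul, sum_add_distrib, ← sum_mul,
      sum_prod_becW, one_mul]
    rw [sum_comm]
    refine congrArg _ (sum_congr rfl fun y _ => ?_)
    simp only [prod_becW, apply_ite Real.negMulLog, Real.negMulLog_zero, mul_ite, mul_zero,
      ← sum_filter, consistentProb, sum_mul, W]
  have hgroup : ∑ y, W y * Real.negMulLog (consistentProb p y) =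
      Real.log 2 * ∑ s, bernoulliWeight t s * marginalEntropy p s := by
    rw [← sum_fiberwise univ revealed, mul_sum]
    refine sum_congr rfl fun s _ => ?_
    have hW : ∀ y ∈ ({y | revealed y = s} : Finset _), W y * Real.negMulLog (consistentProb p y) =
        bernoulliWeight t s * Real.negMulLog (consistentProb p y) := fun y hy => by
      simp only [W, (mem_filter.1 hy).2]
    rw [sum_congr rfl hW, ← mul_sum, sum_negMulLog_consistentProb_of_revealed_eq]
    ring
  rw [MI, H2_eq_sum_negMulLog_div, H2_eq_sum_negMulLog_div, H2_eq_sum_negMulLog_div, hL, hR,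
    hjoint]
  simp only [Real.negMulLog_mul, sum_add_distrib, hgroup]
  field_simp
  ring

end BinaryErasureChannel

/-- For `Xⁿ` on `{0,1}ⁿ` sent through a memoryless BEC with survival probability `t`,
the map `t ↦ I(Xⁿ;Yⁿ(t))/t` is non-increasing on `(0,1]`. -/
theorem bec_mi_ratio_monotone (n : ℕ) (p : (Fin n → Bool) → ℝ) (hp : IsPMF p)
    (t₁ t₂ : ℝ) (ht₁ : 0 < t₁) (h12 : t₁ ≤ t₂) (ht₂ : t₂ ≤ 1) :
    MI (fun xy : (Fin n → Bool) × (Fin n → Option Bool) =>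
        p xy.1 * ∏ i, becW t₂ (xy.1 i) (xy.2 i)) / t₂ ≤
    MI (fun xy : (Fin n → Bool) × (Fin n → Option Bool) =>
        p xy.1 * ∏ i, becW t₁ (xy.1 i) (xy.2 i)) / t₁ := by
  rw [MI_becW_eq_sum, MI_becW_eq_sum]
  exact (submodular_marginalEntropy hp.1).antitoneOn_sum_bernoulliWeight_mul_div
    (marginalEntropy_empty hp.2) ⟨ht₁, h12.trans ht₂⟩ ⟨ht₁.trans_le h12, ht₂⟩ h12
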